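/- Let d ≥ 2 and let μ_d be the Haar probability measure on the unitary group U(d). Then ∫ |U_{00}|² · |U_{10}|² dμ_d(U) = 1 / (d(d+1)), where U_{00} and U_{10} denote the (0,0) and (1,0) entries of U. -/

import Mathlib

open MeasureTheory


namespace HaarAux

open Complex Matrix

variable {d : ℕ}

noncomputable abbrev ent (s j : Fin d) (U : Matrix.unitaryGroup (Fin d) ℂ) : ℂ :=
  (U : Matrix (Fin d) (Fin d) ℂ) s j

noncomputable abbrev q (s j : Fin d) (U : Matrix.unitaryGroup (Fin d) ℂ) : ℝ :=
  Complex.normSq (ent s j U)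

lemma ent_bound (s j : Fin d) (U : Matrix.unitaryGroup (Fin d) ℂ) :
    ‖ent s j U‖ ≤ 1 := by
  simpa using entry_norm_bound_of_unitary U.2 s j

lemma q_nonneg (s j : Fin d) (U : Matrix.unitaryGroup (Fin d) ℂ) : 0 ≤ q s j U :=
  Complex.normSq_nonneg _

lemma q_le_one (s j : Fin d) (U : Matrix.unitaryGroup (Fin d) ℂ) : q s j U ≤ 1 := by
  have := ent_bound s j U
  have h2 : ‖ent s j U‖ ^ 2 ≤ 1 := by nlinarith [norm_nonneg (ent s j U)]
  simpa [Complex.sq_norm] using h2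

lemma cont_ent (s j : Fin d) : Continuous (ent s j) :=
  (continuous_apply j).comp ((continuous_apply s).comp continuous_subtype_val)

lemma cont_q (s j : Fin d) : Continuous (q s j) :=
  Complex.continuous_normSq.comp (cont_ent s j)

lemma col_sum (U : Matrix.unitaryGroup (Fin d) ℂ) (j : Fin d) :
    ∑ s, q s j U = 1 := by
  have h : star (U : Matrix (Fin d) (Fin d) ℂ) * U = 1 :=
    (Matrix.mem_unitaryGroup_iff').mp U.2
  have h2 := congrFun (congrFun h j) j
  rw [Matrix.mul_apply, Matrix.one_apply_eq] at h2
  have h3 : ∑ s, ((Complex.normSq ((U : Matrix (Fin d) (Fin d) ℂ) s j) : ℂ)) = 1 := by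
    rw [← h2]
    refine Finset.sum_congr rfl fun s _ => ?_
    rw [Matrix.star_apply, Complex.normSq_eq_conj_mul_self]
    rfl
  have h4 : ((∑ s, Complex.normSq ((U : Matrix (Fin d) (Fin d) ℂ) s j) : ℝ) : ℂ) = ((1:ℝ):ℂ) := by
    push_cast
    simpa using h3
  exact_mod_cast h4

section Matrices

/-- permutation matrix -/
def permM (σ : Equiv.Perm (Fin d)) : Matrix (Fin d) (Fin d) ℂ :=
  Matrix.of fun i k => if i = σ k then 1 else 0

lemma permM_mem (σ : Equiv.Perm (Fin d)) : permM σ ∈ Matrix.unitaryGroup (Fin d) ℂ := by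
  rw [Matrix.mem_unitaryGroup_iff']
  ext a b
  simp only [Matrix.mul_apply, Matrix.star_apply, permM, Matrix.of_apply, apply_ite (star : ℂ → ℂ), star_one,
    star_zero, ite_mul, one_mul, zero_mul, Finset.sum_ite_eq, Finset.sum_ite_eq', Finset.mem_univ, if_true,
    Matrix.one_apply, EmbeddingLike.apply_eq_iff_eq]

noncomputable def permU (σ : Equiv.Perm (Fin d)) : Matrix.unitaryGroup (Fin d) ℂ :=
  ⟨permM σ, permM_mem σ⟩

lemma ent_permU (σ : Equiv.Perm (Fin d)) (U : Matrix.unitaryGroup (Fin d) ℂ) (i j : Fin d) :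
    ent i j (permU σ * U) = ent (σ⁻¹ i) j U := by
  show (permM σ * (U : Matrix (Fin d) (Fin d) ℂ)) i j = _
  rw [Matrix.mul_apply]
  rw [Finset.sum_eq_single (σ⁻¹ i)]
  · simp [permM]
  · intro k _ hk
    simp only [permM, Matrix.of_apply, ite_mul, one_mul, zero_mul]
    rw [if_neg]
    intro h
    exact hk (by simp [h])
  · intro h; exact absurd (Finset.mem_univ _) h

lemma q_permU (σ : Equiv.Perm (Fin d)) (U : Matrix.unitaryGroup (Fin d) ℂ) (i j : Fin d) :
    q i j (permU σ * U) = q (σ⁻¹ i) j U := by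
  unfold q; rw [ent_permU]

/-- diagonal phase matrix -/
def diagM (z : ℂ) (i0 : Fin d) : Matrix (Fin d) (Fin d) ℂ :=
  Matrix.diagonal fun i => if i = i0 then z else 1

lemma diagM_mem (z : ℂ) (hz : Complex.normSq z = 1) (i0 : Fin d) :
    diagM z i0 ∈ Matrix.unitaryGroup (Fin d) ℂ := by
  rw [Matrix.mem_unitaryGroup_iff']
  have hz' : (starRingEnd ℂ) z * z = 1 := by
    rw [← Complex.normSq_eq_conj_mul_self, hz, Complex.ofReal_one]
  rw [diagM, Matrix.star_eq_conjTranspose, Matrix.diagonal_conjTranspose, Matrix.diagonal_mul_diagonal]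
  ext i k
  rcases eq_or_ne i k with rfl | hik
  · by_cases h : i = i0 <;> simp [Matrix.diagonal_apply_eq, Matrix.one_apply_eq, h, hz']
  · simp [Matrix.diagonal_apply_ne _ hik, Matrix.one_apply_ne hik]

noncomputable def diagU (z : ℂ) (hz : Complex.normSq z = 1) (i0 : Fin d) :
    Matrix.unitaryGroup (Fin d) ℂ :=
  ⟨diagM z i0, diagM_mem z hz i0⟩

lemma ent_diagU (z : ℂ) (hz : Complex.normSq z = 1) (i0 : Fin d)
    (U : Matrix.unitaryGroup (Fin d) ℂ) (i j : Fin d) :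
    ent i j (diagU z hz i0 * U) = (if i = i0 then z else 1) * ent i j U := by
  show (diagM z i0 * (U : Matrix (Fin d) (Fin d) ℂ)) i j = _
  rw [diagM, Matrix.diagonal_mul]

end Matrices

section Hadamard

noncomputable def rr : ℝ := (Real.sqrt 2)⁻¹

lemma rr_mul_rr : rr * rr = 1/2 := by
  rw [rr, ← mul_inv, Real.mul_self_sqrt (by norm_num : (0:ℝ) ≤ 2)]
  norm_num

noncomputable def hadM (i0 i1 : Fin d) : Matrix (Fin d) (Fin d) ℂ :=
  Matrix.of fun i k =>
    if i = i0 then (if k = i0 then (rr : ℂ) else if k = i1 then (rr : ℂ) else 0)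
    else if i = i1 then (if k = i0 then (rr : ℂ) else if k = i1 then -(rr : ℂ) else 0)
    else if k = i then 1 else 0

lemma sum_split (i0 i1 : Fin d) (h : i0 ≠ i1) (F : Fin d → ℂ) :
    ∑ i, F i = F i0 + F i1 + ∑ i ∈ (Finset.univ.erase i0).erase i1, F i := by
  rw [← Finset.sum_erase_add Finset.univ F (Finset.mem_univ i0)]
  rw [← Finset.sum_erase_add (Finset.univ.erase i0) F
    (Finset.mem_erase.mpr ⟨h.symm, Finset.mem_univ i1⟩)]
  ring

lemma hadM_mem (i0 i1 : Fin d) (h01 : i0 ≠ i1) :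
    hadM i0 i1 ∈ Matrix.unitaryGroup (Fin d) ℂ := by
  have hrr : (rr : ℂ) * (rr : ℂ) = 1/2 := by
    rw [← Complex.ofReal_mul, rr_mul_rr]; norm_num
  rw [Matrix.mem_unitaryGroup_iff']
  ext a b
  rw [Matrix.mul_apply]
  simp only [Matrix.star_apply, Matrix.conjTranspose_apply]
  rw [sum_split i0 i1 h01]
  have herase : ∑ i ∈ (Finset.univ.erase i0).erase i1,
      star (hadM i0 i1 i a) * hadM i0 i1 i b
      = ∑ i ∈ (Finset.univ.erase i0).erase i1,
        (if a = i then 1 else 0) * (if b = i then 1 else 0) := by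
    refine Finset.sum_congr rfl fun i hi => ?_
    rw [Finset.mem_erase, Finset.mem_erase] at hi
    simp [hadM, hi.1, hi.2.1, apply_ite (star : ℂ → ℂ)]
  rw [herase]
  have hsum : ∑ i ∈ (Finset.univ.erase i0).erase i1,
      (if a = i then (1:ℂ) else 0) * (if b = i then 1 else 0)
      = if b ∈ (Finset.univ.erase i0).erase i1 then (if a = b then (1:ℂ) else 0) else 0 := by
    simp [ite_mul, Finset.sum_ite_eq]
  rw [hsum]
  by_cases ha0 : a = i0 <;> by_cases ha1 : a = i1 <;> by_cases hb0 : b = i0 <;>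
    by_cases hb1 : b = i1
  all_goals
    first
    | (exfalso; exact h01 (ha0 ▸ ha1 ▸ rfl))
    | (exfalso; exact h01 (hb0 ▸ hb1 ▸ rfl))
    | (subst_vars
       simp only [hadM, Matrix.of_apply, Matrix.one_apply, Finset.mem_erase, Finset.mem_univ,
         and_true]
       simp_all [apply_ite (star : ℂ → ℂ), hrr, Ne.symm]
       try ring_nf
       try simp_all [hrr]
       try linear_combination hrr + hrr)

end Hadamard

noncomputable def hadU (i0 i1 : Fin d) (h01 : i0 ≠ i1) : Matrix.unitaryGroup (Fin d) ℂ :=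
  ⟨hadM i0 i1, hadM_mem i0 i1 h01⟩

lemma ent_hadU (i0 i1 : Fin d) (h01 : i0 ≠ i1) (U : Matrix.unitaryGroup (Fin d) ℂ) (j : Fin d) :
    ent i0 j (hadU i0 i1 h01 * U) = (rr : ℂ) * ent i0 j U + (rr : ℂ) * ent i1 j U := by
  show (hadM i0 i1 * (U : Matrix (Fin d) (Fin d) ℂ)) i0 j = _
  rw [Matrix.mul_apply, sum_split i0 i1 h01]
  have : ∑ i ∈ (Finset.univ.erase i0).erase i1,
      hadM i0 i1 i0 i * (U : Matrix (Fin d) (Fin d) ℂ) i j = 0 := by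
    refine Finset.sum_eq_zero fun i hi => ?_
    rw [Finset.mem_erase, Finset.mem_erase] at hi
    simp [hadM, hi.1, hi.2.1]
  rw [this]
  simp [hadM, h01, Ne.symm h01, ent]

section Analysis

variable [MeasurableSpace (Matrix.unitaryGroup (Fin d) ℂ)]
  [BorelSpace (Matrix.unitaryGroup (Fin d) ℂ)]
  (μ : Measure (Matrix.unitaryGroup (Fin d) ℂ))
  [μ.IsHaarMeasure] [IsProbabilityMeasure μ]

lemma integrable_bd {f : Matrix.unitaryGroup (Fin d) ℂ → ℝ} (hf : Continuous f) (C : ℝ)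
    (hb : ∀ U, |f U| ≤ C) : Integrable f μ :=
  (integrable_const C).mono' hf.aestronglyMeasurable
    (ae_of_all _ fun U => by simpa [Real.norm_eq_abs] using hb U)

lemma inv_int (V : Matrix.unitaryGroup (Fin d) ℂ) (f : Matrix.unitaryGroup (Fin d) ℂ → ℝ) :
    ∫ U, f (V * U) ∂μ = ∫ U, f U ∂μ :=
  integral_mul_left_eq_self f V

lemma odd_vanish {f : Matrix.unitaryGroup (Fin d) ℂ → ℝ} (V : Matrix.unitaryGroup (Fin d) ℂ)
    (h : ∀ U, f (V * U) = -f U) : ∫ U, f U ∂μ = 0 := by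
  have h1 := inv_int μ V f
  simp_rw [h, integral_neg] at h1
  linarith

end Analysis


section Main

set_option linter.unusedSectionVars false

variable [MeasurableSpace (Matrix.unitaryGroup (Fin d) ℂ)]
  [BorelSpace (Matrix.unitaryGroup (Fin d) ℂ)]
  (μ : Measure (Matrix.unitaryGroup (Fin d) ℂ))
  [μ.IsHaarMeasure] [IsProbabilityMeasure μ]

lemma int_add2 {f1 f2 : Matrix.unitaryGroup (Fin d) ℂ → ℝ}
    (h1 : Integrable f1 μ) (h2 : Integrable f2 μ) :
    ∫ U, (f1 U + f2 U) ∂μ = (∫ U, f1 U ∂μ) + ∫ U, f2 U ∂μ :=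
  integral_add h1 h2

lemma int_add6 {f1 f2 f3 f4 f5 f6 : Matrix.unitaryGroup (Fin d) ℂ → ℝ}
    (h1 : Integrable f1 μ) (h2 : Integrable f2 μ) (h3 : Integrable f3 μ)
    (h4 : Integrable f4 μ) (h5 : Integrable f5 μ) (h6 : Integrable f6 μ) :
    ∫ U, (f1 U + f2 U + f3 U + f4 U + f5 U + f6 U) ∂μ
      = (∫ U, f1 U ∂μ) + (∫ U, f2 U ∂μ) + (∫ U, f3 U ∂μ) + (∫ U, f4 U ∂μ)
        + (∫ U, f5 U ∂μ) + ∫ U, f6 U ∂μ := by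
  have H2 : Integrable (fun U => f1 U + f2 U) μ := h1.add h2
  have H3 : Integrable (fun U => f1 U + f2 U + f3 U) μ := H2.add h3
  have H4 : Integrable (fun U => f1 U + f2 U + f3 U + f4 U) μ := H3.add h4
  have H5 : Integrable (fun U => f1 U + f2 U + f3 U + f4 U + f5 U) μ := H4.add h5
  rw [integral_add H5 h6, integral_add H4 h5, integral_add H3 h4, integral_add H2 h3,
    integral_add h1 h2]

lemma main_calc (i0 i1 j : Fin d) (h01 : i0 ≠ i1) :
    ∫ U, q i0 j U * q i1 j U ∂μ = 1 / ((d : ℝ) * ((d : ℝ) + 1)) := by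
  classical
  set w : Matrix.unitaryGroup (Fin d) ℂ → ℝ :=
    fun U => (ent i0 j U * (starRingEnd ℂ) (ent i1 j U)).re with hw_def
  have cont_w : Continuous w :=
    Complex.continuous_re.comp ((cont_ent i0 j).mul (Complex.continuous_conj.comp (cont_ent i1 j)))
  have w_bd : ∀ U, |w U| ≤ 1 := by
    intro U
    calc |w U| ≤ ‖ent i0 j U * (starRingEnd ℂ) (ent i1 j U)‖ :=
          Complex.abs_re_le_norm _
      _ = ‖ent i0 j U‖ * ‖ent i1 j U‖ := by
          rw [norm_mul, Complex.norm_conj]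
      _ ≤ 1 := by
          have h1 := ent_bound i0 j U; have h2 := ent_bound i1 j U
          have h3 := norm_nonneg (ent i0 j U); have h4 := norm_nonneg (ent i1 j U)
          nlinarith
  have hqq : ∀ s t : Fin d, Integrable (fun U => q s j U * q t j U) μ := by
    intro s t
    refine integrable_bd μ ((cont_q s j).mul (cont_q t j)) 1 fun U => ?_
    have h1 := q_le_one s j U; have h2 := q_nonneg s j U
    have h3 := q_le_one t j U; have h4 := q_nonneg t j U
    rw [abs_mul, _root_.abs_of_nonneg h2, _root_.abs_of_nonneg h4]
    nlinarith
  have hqw : ∀ s : Fin d, Integrable (fun U => q s j U * w U) μ := by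
    intro s
    refine integrable_bd μ ((cont_q s j).mul cont_w) 1 fun U => ?_
    have h1 := q_le_one s j U; have h2 := q_nonneg s j U; have h3 := w_bd U
    rw [abs_mul, _root_.abs_of_nonneg h2]
    nlinarith [abs_nonneg (w U)]
  have hww : Integrable (fun U => w U * w U) μ := by
    refine integrable_bd μ (cont_w.mul cont_w) 1 fun U => ?_
    have := w_bd U
    rw [abs_mul]
    nlinarith [abs_nonneg (w U)]
  have hre2 : Integrable (fun U => ((ent i0 j U * (starRingEnd ℂ) (ent i1 j U)) ^ 2).re) μ := by
    refine integrable_bd μ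
      (Complex.continuous_re.comp (((cont_ent i0 j).mul
        (Complex.continuous_conj.comp (cont_ent i1 j))).pow 2)) 1 fun U => ?_
    have h1 := ent_bound i0 j U; have h2 := ent_bound i1 j U
    have h3 := norm_nonneg (ent i0 j U); have h4 := norm_nonneg (ent i1 j U)
    calc |((ent i0 j U * (starRingEnd ℂ) (ent i1 j U)) ^ 2).re|
        ≤ ‖(ent i0 j U * (starRingEnd ℂ) (ent i1 j U)) ^ 2‖ := Complex.abs_re_le_norm _
      _ = (‖ent i0 j U‖ * ‖ent i1 j U‖) ^ 2 := by
          rw [norm_pow, norm_mul, Complex.norm_conj]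
      _ ≤ 1 := by
          have h5 : ‖ent i0 j U‖ * ‖ent i1 j U‖ ≤ 1 := by nlinarith
          have h6 := mul_nonneg h3 h4
          nlinarith
  set Ei : Fin d → Fin d → ℝ := fun s t => ∫ U, q s j U * q t j U ∂μ with hEi_def
  have hperm : ∀ (σ : Equiv.Perm (Fin d)) (s t : Fin d), Ei (σ s) (σ t) = Ei s t := by
    intro σ s t
    have h := inv_int μ (permU σ⁻¹) (fun U => q s j U * q t j U)
    simp_rw [q_permU, inv_inv] at h
    exact h
  have hdiag : ∀ s : Fin d, Ei s s = Ei i0 i0 := by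
    intro s
    have := hperm (Equiv.swap i0 s) i0 i0
    rwa [Equiv.swap_apply_left] at this
  have hoff : ∀ s t : Fin d, s ≠ t → Ei s t = Ei i0 i1 := by
    intro s t hst
    set σ : Equiv.Perm (Fin d) :=
      (Equiv.swap i1 (Equiv.swap i0 s t)).trans (Equiv.swap i0 s) with hσ
    have hs : σ i0 = s := by
      have hne1 : i0 ≠ Equiv.swap i0 s t := by
        intro h
        apply hst
        have := congrArg (Equiv.swap i0 s) h
        rwa [Equiv.swap_apply_left, Equiv.swap_apply_self] at this
      simp only [hσ, Equiv.trans_apply]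
      rw [Equiv.swap_apply_of_ne_of_ne h01 hne1, Equiv.swap_apply_left]
    have ht : σ i1 = t := by
      simp only [hσ, Equiv.trans_apply]
      rw [Equiv.swap_apply_left, Equiv.swap_apply_self]
    have h := hperm σ i0 i1
    rw [hs, ht] at h
    exact h
  set a : ℝ := Ei i0 i0 with ha_def
  set b : ℝ := Ei i0 i1 with hb_def
  have hsum1 : ∑ s : Fin d, ∑ t : Fin d, Ei s t = 1 := by
    have hpt : ∀ U : Matrix.unitaryGroup (Fin d) ℂ,
        (∑ s : Fin d, ∑ t : Fin d, q s j U * q t j U) = 1 := by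
      intro U
      rw [← Finset.sum_mul_sum, col_sum U j, one_mul]
    have h1 : ∀ s : Fin d, Integrable (fun U => ∑ t : Fin d, q s j U * q t j U) μ :=
      fun s => integrable_finset_sum _ fun t _ => hqq s t
    calc ∑ s : Fin d, ∑ t : Fin d, Ei s t
        = ∑ s : Fin d, ∫ U, ∑ t : Fin d, q s j U * q t j U ∂μ := by
          refine Finset.sum_congr rfl fun s _ => ?_
          rw [integral_finset_sum _ fun t _ => hqq s t]
      _ = ∫ U, ∑ s : Fin d, ∑ t : Fin d, q s j U * q t j U ∂μ :=
          (integral_finset_sum _ fun s _ => h1 s).symm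
      _ = 1 := by simp [hpt]
  have hneg1 : Complex.normSq (-1 : ℂ) = 1 := by simp
  have hV1 : ∫ U, q i0 j U * w U ∂μ = 0 := by
    refine odd_vanish μ (diagU (-1) hneg1 i0) fun U => ?_
    simp only [q, w, ent_diagU, if_pos rfl, if_neg (Ne.symm h01)]
    simp [Complex.normSq_apply, Complex.mul_re, Complex.mul_im]
    ring
  have hV2 : ∫ U, q i1 j U * w U ∂μ = 0 := by
    refine odd_vanish μ (diagU (-1) hneg1 i0) fun U => ?_
    simp only [q, w, ent_diagU, if_pos rfl, if_neg (Ne.symm h01)]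
    simp [Complex.normSq_apply, Complex.mul_re, Complex.mul_im]
    ring
  have hnegI : Complex.normSq (Complex.I) = 1 := by simp
  have hV3 : ∫ U, ((ent i0 j U * (starRingEnd ℂ) (ent i1 j U)) ^ 2).re ∂μ = 0 := by
    refine odd_vanish μ (diagU Complex.I hnegI i0) fun U => ?_
    have hx := ent_diagU Complex.I hnegI i0 U i0 j
    have hy := ent_diagU Complex.I hnegI i0 U i1 j
    rw [if_pos rfl] at hx
    rw [if_neg (Ne.symm h01), one_mul] at hy
    simp only [hx, hy]
    have key : (Complex.I * ent i0 j U * (starRingEnd ℂ) (ent i1 j U)) ^ 2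
        = -((ent i0 j U * (starRingEnd ℂ) (ent i1 j U)) ^ 2) := by
      linear_combination ((ent i0 j U) * ((starRingEnd ℂ) (ent i1 j U))) ^ 2 * Complex.I_sq
    rw [key, Complex.neg_re]
  have hW2 : ∫ U, w U * w U ∂μ = b / 2 := by
    have hpt : ∀ U : Matrix.unitaryGroup (Fin d) ℂ, w U * w U
        = (1/2) * ((ent i0 j U * (starRingEnd ℂ) (ent i1 j U)) ^ 2).re
          + (1/2) * (q i0 j U * q i1 j U) := by
      intro U
      have h1 : q i0 j U * q i1 j U
          = Complex.normSq (ent i0 j U * (starRingEnd ℂ) (ent i1 j U)) := by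
        rw [Complex.normSq_mul, Complex.normSq_conj]
      rw [h1]
      simp only [w, pow_two, Complex.mul_re, Complex.mul_im, Complex.normSq_apply]
      ring
    simp_rw [hpt]
    rw [int_add2 μ (hre2.const_mul (1/2 : ℝ)) ((hqq i0 i1).const_mul (1/2 : ℝ)),
      integral_const_mul, integral_const_mul, hV3]
    have hbb : (∫ U, q i0 j U * q i1 j U ∂μ) = b := rfl
    rw [hbb]
    ring
  have hHad : a = 2 * b := by
    have hinv := inv_int μ (hadU i0 i1 h01) (fun U => q i0 j U * q i0 j U)
    have hpt : ∀ U : Matrix.unitaryGroup (Fin d) ℂ,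
        q i0 j (hadU i0 i1 h01 * U) * q i0 j (hadU i0 i1 h01 * U)
        = (1/4) * (q i0 j U * q i0 j U) + (1/4) * (q i1 j U * q i1 j U)
          + (w U * w U) + (1/2) * (q i0 j U * q i1 j U)
          + (q i0 j U * w U) + (q i1 j U * w U) := by
      intro U
      have hq0 : q i0 j (hadU i0 i1 h01 * U) = (1/2) * (q i0 j U + q i1 j U + 2 * w U) := by
        show Complex.normSq (ent i0 j (hadU i0 i1 h01 * U)) = _
        rw [ent_hadU, ← mul_add, Complex.normSq_mul, Complex.normSq_ofReal, rr_mul_rr,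
          Complex.normSq_add]
      rw [hq0]
      ring
    simp_rw [hpt] at hinv
    rw [int_add6 μ ((hqq i0 i0).const_mul (1/4 : ℝ)) ((hqq i1 i1).const_mul (1/4 : ℝ))
      hww ((hqq i0 i1).const_mul (1/2 : ℝ)) (hqw i0) (hqw i1),
      integral_const_mul, integral_const_mul, integral_const_mul,
      hV1, hV2, hW2] at hinv
    have haa : (∫ U, q i1 j U * q i1 j U ∂μ) = a := hdiag i1
    have haa0 : (∫ U, q i0 j U * q i0 j U ∂μ) = a := rfl
    have hbb : (∫ U, q i0 j U * q i1 j U ∂μ) = b := rfl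
    rw [haa, haa0, hbb] at hinv
    linarith
  have hval : ∀ s t : Fin d, Ei s t = if s = t then a else b := by
    intro s t
    by_cases h : s = t
    · subst h; rw [if_pos rfl]; exact hdiag s
    · rw [if_neg h]; exact hoff s t h
  have hsum2 : ∑ s : Fin d, ∑ t : Fin d, Ei s t = (d : ℝ) * ((d : ℝ) * b + (a - b)) := by
    have hrow : ∀ s : Fin d, ∑ t : Fin d, Ei s t = (d : ℝ) * b + (a - b) := by
      intro s
      have h : ∀ t : Fin d, Ei s t = b + (if s = t then a - b else 0) := by
        intro t
        rw [hval s t]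
        by_cases h : s = t <;> simp [h]
      simp_rw [h]
      rw [Finset.sum_add_distrib, Finset.sum_const, Finset.sum_ite_eq]
      simp [mul_comm]
    simp_rw [hrow]
    rw [Finset.sum_const]
    simp only [Finset.card_univ, Fintype.card_fin, nsmul_eq_mul]
    try ring
  rw [hsum2] at hsum1
  have hdpos : 0 < d := i0.pos
  have hd0 : (0 : ℝ) < (d : ℝ) * ((d : ℝ) + 1) := by
    have h1 : (1 : ℝ) ≤ (d : ℝ) := by exact_mod_cast hdpos
    nlinarith
  show b = 1 / ((d : ℝ) * ((d : ℝ) + 1))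
  rw [eq_div_iff (ne_of_gt hd0)]
  nlinarith [hsum1, hHad]

end Main

end HaarAux

theorem haar_mixed_second_moments
    (d : ℕ) (hd : 2 ≤ d)
    [MeasurableSpace (Matrix.unitaryGroup (Fin d) ℂ)]
    [BorelSpace (Matrix.unitaryGroup (Fin d) ℂ)]
    (μ : Measure (Matrix.unitaryGroup (Fin d) ℂ))
    [μ.IsHaarMeasure] [IsProbabilityMeasure μ] :
    ∫ U, ‖(U : Matrix (Fin d) (Fin d) ℂ) ⟨0, by omega⟩ ⟨0, by omega⟩‖ ^ 2 *
          ‖(U : Matrix (Fin d) (Fin d) ℂ) ⟨1, by omega⟩ ⟨0, by omega⟩‖ ^ 2 ∂μ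
      = 1 / ((d : ℝ) * ((d : ℝ) + 1)) := by
  have h0 : 0 < d := by omega
  have h1 : 1 < d := by omega
  have h01 : (⟨0, h0⟩ : Fin d) ≠ ⟨1, h1⟩ := by
    intro h
    exact absurd (Fin.mk.inj_iff.mp h) (by omega)
  have key := HaarAux.main_calc μ ⟨0, h0⟩ ⟨1, h1⟩ ⟨0, h0⟩ h01
  simp only [HaarAux.q, HaarAux.ent] at key
  simp_rw [Complex.sq_norm]
  exact key
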